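/- arXiv:2305.04786 — 2 statements merged into one kernel-verified Lean document; each statement's English description precedes it below -/
import Mathlib

section
/- If p is prime and q ≥ 1, then the period of the Pell-Narayana sequence modulo p^(q+1) divides p times the period modulo p^q. -/
/-- The Pell-Narayana sequence: PN(0)=0, PN(1)=1, PN(2)=1, PN(n+3)=2·PN(n+2)+PN(n). -/
def PN : ℕ → ℕ
  | 0 => 0
  | 1 => 1
  | 2 => 1
  | n + 3 => 2 * PN (n + 2) + PN n

lemma PNZ_rec (n : ℕ) : (PN (n+3) : ℤ) = 2 * PN (n+2) + PN n := by
  rw [show PN (n+3) = 2 * PN (n+2) + PN n from rfl]; push_cast; ring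

lemma PN_comb (x : ℕ → ℤ) (hx : ∀ n, x (n+3) = 2 * x (n+2) + x n) (m : ℕ) :
    2 * x m = (-(x 0) + 3 * x 1 - x 2) * PN m + (3 * x 0 + x 1 - x 2) * PN (m+1)
      + (-(x 0) - x 1 + x 2) * PN (m+2) := by
  induction m using Nat.strong_induction_on with
  | _ m ih =>
    match m with
    | 0 => show _ = _ * ((0:ℕ):ℤ) + _ * ((1:ℕ):ℤ) + _ * ((1:ℕ):ℤ); push_cast; ring
    | 1 => show _ = _ * ((1:ℕ):ℤ) + _ * ((1:ℕ):ℤ) + _ * ((2:ℕ):ℤ); push_cast; ring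
    | 2 => show _ = _ * ((1:ℕ):ℤ) + _ * ((2:ℕ):ℤ) + _ * ((5:ℕ):ℤ); push_cast; ring
    | (k+3) =>
      have h1 := ih k (by omega)
      have h2 := ih (k+2) (by omega)
      have e1 := PNZ_rec k
      have e2 := PNZ_rec (k+1)
      have e3 := PNZ_rec (k+2)
      have hxk := hx k
      rw [show k+3+1 = (k+1)+3 from rfl, show k+3+2 = (k+2)+3 from rfl] at *
      rw [e1, e2, e3, hxk]
      linear_combination 2 * h2 + h1

lemma PN_even_iff : ∀ m : ℕ, (2 ∣ PN m ↔ 3 ∣ m) := by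
  have key : ∀ m : ℕ, (2 ∣ PN m ↔ 3 ∣ m) ∧ (2 ∣ PN (m+1) ↔ 3 ∣ (m+1)) ∧
      (2 ∣ PN (m+2) ↔ 3 ∣ (m+2)) := by
    intro m
    induction m with
    | zero => refine ⟨?_, ?_, ?_⟩ <;> simp [PN] <;> omega
    | succ k ih =>
      obtain ⟨h0, h1, h2⟩ := ih
      refine ⟨h1, h2, ?_⟩
      rw [show k+1+2 = k+3 from rfl, show PN (k+3) = 2 * PN (k+2) + PN k from rfl]
      constructor
      · intro h
        have : 2 ∣ PN k := by omega
        have := h0.mp this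
        omega
      · intro h
        have : 3 ∣ k := by omega
        have := h0.mpr this
        omega
  exact fun m => (key m).1

lemma least_period_dvd (m : ℕ) (b : ℕ)
    (hb : IsLeast {k : ℕ | 0 < k ∧ ∀ n : ℕ, PN (n + k) ≡ PN n [MOD m]} b)
    (k : ℕ) (hk : 0 < k) (hper : ∀ n : ℕ, PN (n + k) ≡ PN n [MOD m]) : b ∣ k := by
  obtain ⟨⟨hbpos, hbper⟩, hbmin⟩ := hb
  induction k using Nat.strong_induction_on with
  | _ k ih =>
    have hble : b ≤ k := hbmin ⟨hk, hper⟩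
    rcases eq_or_lt_of_le hble with h | h
    · exact h ▸ dvd_refl b
    · have hper' : ∀ n : ℕ, PN (n + (k - b)) ≡ PN n [MOD m] := by
        intro n
        have h1 : PN ((n + (k - b)) + b) ≡ PN (n + (k - b)) [MOD m] := hbper _
        have h2 : (n + (k - b)) + b = n + k := by omega
        rw [h2] at h1
        exact h1.symm.trans (hper n)
      have hd1 := ih (k - b) (by omega) (by omega) hper'
      have hd2 : b ∣ (k - b) + b := Dvd.dvd.add hd1 (dvd_refl b)
      rwa [Nat.sub_add_cancel hble] at hd2

theorem PN_period_prime_pow_dvd_mul (p : ℕ) (hp : p.Prime) (q : ℕ) (hq : 1 ≤ q)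
    (a b : ℕ)
    (ha : IsLeast {k : ℕ | 0 < k ∧ ∀ n : ℕ, PN (n + k) ≡ PN n [MOD p ^ q]} a)
    (hb : IsLeast {k : ℕ | 0 < k ∧ ∀ n : ℕ, PN (n + k) ≡ PN n [MOD p ^ (q + 1)]} b) :
    b ∣ p * a := by
  obtain ⟨⟨hapos, haper⟩, _⟩ := ha
  -- the difference sequence is divisible by p^q
  have hd : ∀ n : ℕ, ((p:ℤ)^q) ∣ ((PN (n+a) : ℤ) - PN n) := by
    intro n
    have h := (Nat.modEq_iff_dvd.mp (haper n))
    push_cast at h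
    have := dvd_neg.mpr h
    rwa [neg_sub] at this
  -- divide it by p^q
  obtain ⟨c, hc⟩ : ∃ c : ℕ → ℤ, ∀ n, (p:ℤ)^q * c n = (PN (n+a):ℤ) - PN n :=
    ⟨fun n => ((PN (n+a):ℤ) - PN n) / (p:ℤ)^q, fun n => Int.mul_ediv_cancel' (hd n)⟩
  have hpq0 : ((p:ℤ)^q) ≠ 0 := by
    have := hp.pos
    positivity
  -- c satisfies the recurrence
  have hcrec : ∀ n, c (n+3) = 2 * c (n+2) + c n := by
    intro n
    have h1 := hc n
    have h2 := hc (n+2)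
    have h3 := hc (n+3)
    rw [show n+3+a = (n+a)+3 by ring] at h3
    rw [show n+2+a = (n+a)+2 by ring] at h2
    have e1 := PNZ_rec n
    have e2 := PNZ_rec (n+a)
    apply mul_left_cancel₀ hpq0
    linear_combination h3 - 2*h2 - h1 + e2 - e1
  -- p divides each difference (since q ≥ 1)
  have hpdvd : ∀ n : ℕ, (p:ℤ) ∣ ((PN (n+a) : ℤ) - PN n) := by
    intro n
    exact dvd_trans (dvd_pow_self (p:ℤ) (by omega)) (hd n)
  -- key: c is periodic with period a, mod p
  have hkey : ∀ m : ℕ, (p:ℤ) ∣ (c (m+a) - c m) := by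
    rcases eq_or_ne p 2 with hp2 | hp2
    · -- p = 2 : use that 3 ∣ a and x (m+3) ≡ x m mod 2 for solutions
      subst hp2
      have h3a : 3 ∣ a := by
        have hmod : PN (0 + a) ≡ PN 0 [MOD 2] :=
          (haper 0).of_dvd (dvd_pow_self 2 (by omega))
        have : 2 ∣ PN a := by
          have : PN (0 + a) % 2 = PN 0 % 2 := hmod
          simp only [Nat.zero_add] at this
          simp [PN] at this
          omega
        exact (PN_even_iff a).mp this
      obtain ⟨t, ht⟩ := h3a
      have step : ∀ s m : ℕ, (2:ℤ) ∣ c (m + 3*s) - c m := by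
        intro s
        induction s with
        | zero => simp
        | succ s ihs =>
          intro m
          have hr := hcrec (m + 3*s)
          have hsum := dvd_add (⟨c (m + 3*s + 2), by linear_combination hr⟩ :
            (2:ℤ) ∣ c (m + 3*s + 3) - c (m + 3*s)) (ihs m)
          have e : (c (m + 3*s + 3) - c (m + 3*s)) + (c (m + 3*s) - c m)
              = c (m + 3*(s+1)) - c m := by
            rw [show m + 3*(s+1) = m + 3*s + 3 by ring]
            ring
          rwa [e] at hsum
      intro m
      rw [ht, show m + 3*t = m + 3*t from rfl]
      exact step t m
    · -- p odd
      intro m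
      have hma := PN_comb c hcrec (m+a)
      have hm := PN_comb c hcrec m
      rw [show m+a+1 = (m+1)+a by ring, show m+a+2 = (m+2)+a by ring] at hma
      have h2m : (p:ℤ) ∣ 2 * (c (m+a) - c m) := by
        have hrw : 2 * (c (m+a) - c m)
            = (-(c 0) + 3 * c 1 - c 2) * ((PN (m+a):ℤ) - PN m)
            + (3 * c 0 + c 1 - c 2) * ((PN ((m+1)+a):ℤ) - PN (m+1))
            + (-(c 0) - c 1 + c 2) * ((PN ((m+2)+a):ℤ) - PN (m+2)) := by
          linear_combination hma - hm
        rw [hrw]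
        exact dvd_add (dvd_add ((hpdvd m).mul_left _) ((hpdvd (m+1)).mul_left _))
          ((hpdvd (m+2)).mul_left _)
      have hpZ : Prime ((p:ℤ)) := Nat.prime_iff_prime_int.mp hp
      rcases (hpZ.dvd_mul.mp h2m) with h | h
      · exfalso
        have : (p:ℕ) ∣ 2 := by exact_mod_cast h
        exact hp2 ((Nat.prime_dvd_prime_iff_eq hp Nat.prime_two).mp this)
      · exact h
  -- c is periodic with period j*a, mod p
  have hj : ∀ n j : ℕ, (p:ℤ) ∣ c (n + j*a) - c n := by
    intro n j
    induction j with
    | zero => simp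
    | succ j ihj =>
      have h1 := hkey (n + j*a)
      have hsum := dvd_add h1 ihj
      have e : (c (n + j*a + a) - c (n + j*a)) + (c (n + j*a) - c n)
          = c (n + (j+1)*a) - c n := by
        rw [show n + (j+1)*a = n + j*a + a by ring]
        ring
      rwa [e] at hsum
  -- main divisibility
  have hmain : ∀ n : ℕ, ((p:ℤ)^(q+1)) ∣ ((PN (n + p*a) : ℤ) - PN n) := by
    intro n
    have htel : (PN (n + p*a) : ℤ) - PN n
        = ∑ j ∈ Finset.range p, ((PN (n+(j+1)*a):ℤ) - PN (n+j*a)) := by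
      rw [Finset.sum_range_sub (fun j => (PN (n + j*a) : ℤ))]
      norm_num
    have hterm : ∀ j : ℕ, (PN (n+(j+1)*a):ℤ) - PN (n+j*a) = (p:ℤ)^q * c (n+j*a) := by
      intro j
      rw [show n+(j+1)*a = (n+j*a)+a by ring]
      exact (hc _).symm
    rw [htel, Finset.sum_congr rfl (fun j _ => hterm j), ← Finset.mul_sum]
    have hsum : (p:ℤ) ∣ ∑ j ∈ Finset.range p, c (n+j*a) := by
      have hs : ∑ j ∈ Finset.range p, c (n+j*a)
          = (∑ j ∈ Finset.range p, (c (n+j*a) - c n)) + p * c n := by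
        rw [Finset.sum_sub_distrib, Finset.sum_const, Finset.card_range, nsmul_eq_mul]
        ring
      rw [hs]
      exact dvd_add (Finset.dvd_sum fun j _ => hj n j) ⟨c n, rfl⟩
    rw [pow_succ]
    exact mul_dvd_mul_left _ hsum
  -- p*a is a period mod p^(q+1)
  have hper : ∀ n : ℕ, PN (n + p*a) ≡ PN n [MOD p^(q+1)] := by
    intro n
    rw [Nat.modEq_iff_dvd]
    push_cast
    have h := hmain n
    have := dvd_neg.mpr h
    rwa [neg_sub] at this
  exact least_period_dvd (p^(q+1)) b hb (p*a) (Nat.mul_pos hp.pos hapos) hper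
end

section
/- The polyhedral group (ℓ, m, n) = ⟨x, y : x^ℓ = y^m = (xy)^n = e⟩ is finite if and only if mn + nℓ + ℓm − ℓmn > 0, and in that case its order is 2ℓmn/(mn + nℓ + ℓm − ℓmn); restricted to the solvable case (2, 2, n): the group ⟨x, y : x² = y² = (xy)ⁿ = e⟩ has order 2n. -/
/-- The relations of the polyhedral group (ℓ, m, n) = ⟨x, y : x^ℓ = y^m = (xy)^n = e⟩,
with x, y the two free generators indexed by `true`, `false`. -/
def polyhedralRels (l m n : ℕ) : Set (FreeGroup Bool) :=
  {FreeGroup.of true ^ l, FreeGroup.of false ^ m,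
   (FreeGroup.of true * FreeGroup.of false) ^ n}

/-- The polyhedral group (ℓ, m, n). -/
def PolyhedralGroup (l m n : ℕ) : Type := PresentedGroup (polyhedralRels l m n)

instance (l m n : ℕ) : Group (PolyhedralGroup l m n) :=
  inferInstanceAs (Group (PresentedGroup (polyhedralRels l m n)))

section aux

variable {n : ℕ} (hn : 1 < n)

private def X : PolyhedralGroup 2 2 n := PresentedGroup.of true
private def Y : PolyhedralGroup 2 2 n := PresentedGroup.of false

private lemma rel_one {w : FreeGroup Bool} (hw : w ∈ polyhedralRels 2 2 n) :
    PresentedGroup.mk (polyhedralRels 2 2 n) w = 1 :=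
  (QuotientGroup.eq_one_iff _).mpr (Subgroup.subset_normalClosure hw)

private lemma X_sq : (X : PolyhedralGroup 2 2 n) ^ 2 = 1 := by
  have := rel_one (n := n) (w := FreeGroup.of true ^ 2) (by left; rfl)
  simp only [map_pow] at this
  exact this

private lemma Y_sq : (Y : PolyhedralGroup 2 2 n) ^ 2 = 1 := by
  have := rel_one (n := n) (w := FreeGroup.of false ^ 2) (by right; left; rfl)
  simp only [map_pow] at this
  exact this

private lemma XY_pow : ((X * Y : PolyhedralGroup 2 2 n)) ^ n = 1 := by
  have := rel_one (n := n) (w := (FreeGroup.of true * FreeGroup.of false) ^ n)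
    (by right; right; rfl)
  simp only [map_pow, map_mul] at this
  exact this

end aux

/-- The polyhedral group (2, 2, n) is the dihedral group of order 2n. -/
theorem polyhedral_two_two_n (n : ℕ) (hn : 1 < n) :
    Nat.card (PolyhedralGroup 2 2 n) = 2 * n ∧
    Nonempty (PolyhedralGroup 2 2 n ≃* DihedralGroup n) := by
  have hn0 : n ≠ 0 := by omega
  haveI : NeZero n := ⟨hn0⟩
  set G := PolyhedralGroup 2 2 n
  set a : G := X * Y with ha
  set s : G := X with hs
  have hs2 : s * s = 1 := by rw [← sq]; exact X_sq
  have hy2 : (Y : G) * Y = 1 := by rw [← sq]; exact Y_sq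
  have han : a ^ n = 1 := XY_pow
  have hord : orderOf a ∣ n := orderOf_dvd_of_pow_eq_one han
  -- a^k * s = s * (a^k)⁻¹
  have hswap : ∀ k : ℕ, a ^ k * s = s * (a ^ k)⁻¹ := by
    intro k
    induction k with
    | zero => simp
    | succ k ih =>
      have hsi : s⁻¹ = s := inv_eq_of_mul_eq_one_right hs2
      have hyi : (Y : G)⁻¹ = Y := inv_eq_of_mul_eq_one_right hy2
      have hai : a⁻¹ = Y * s := by rw [ha, mul_inv_rev, hsi, hyi]
      have h1 : a * s = s * a⁻¹ := by rw [hai, ha]; group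
      calc a ^ (k + 1) * s = a ^ k * (a * s) := by rw [pow_succ]; group
        _ = a ^ k * s * a⁻¹ := by rw [h1]; group
        _ = s * (a ^ k)⁻¹ * a⁻¹ := by rw [ih]
        _ = s * (a ^ (k + 1))⁻¹ := by rw [pow_succ]; group
  -- powers of a indexed by ZMod n
  set za : ZMod n → G := fun i => a ^ i.val with hza
  have hzadd : ∀ i j : ZMod n, za (i + j) = za i * za j := by
    intro i j
    rw [hza, ← pow_add]
    refine (pow_eq_pow_iff_modEq).mpr (Nat.ModEq.of_dvd hord ?_)
    rw [ZMod.val_add]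
    exact Nat.mod_modEq _ n
  have hzazero : za 0 = 1 := by simp [hza]
  have hzaneg : ∀ i : ZMod n, za (-i) = (za i)⁻¹ := by
    intro i
    rw [eq_inv_iff_mul_eq_one, ← hzadd, neg_add_cancel, hzazero]
  have hzas : ∀ i : ZMod n, za i * s = s * za (-i) := by
    intro i; rw [hzaneg, hza]; exact hswap _
  -- the homomorphism G → DihedralGroup n
  have hrels : ∀ w ∈ polyhedralRels 2 2 n,
      FreeGroup.lift (fun b : Bool => if b then DihedralGroup.sr (0 : ZMod n) else DihedralGroup.sr 1) w
        = 1 := by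
    rintro w (rfl | rfl | rfl)
    · rw [map_pow, FreeGroup.lift_apply_of, if_pos rfl, sq, DihedralGroup.sr_mul_sr, sub_self,
        DihedralGroup.one_def]
    · rw [map_pow, FreeGroup.lift_apply_of, if_neg (by simp), sq, DihedralGroup.sr_mul_sr, sub_self,
        DihedralGroup.one_def]
    · rw [map_pow, map_mul, FreeGroup.lift_apply_of, FreeGroup.lift_apply_of, if_pos rfl, if_neg (by simp),
        DihedralGroup.sr_mul_sr, sub_zero]
      exact DihedralGroup.r_one_pow_n
  let φ : G →* DihedralGroup n := PresentedGroup.toGroup hrels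
  have hφX : φ X = DihedralGroup.sr 0 := PresentedGroup.toGroup.of hrels
  have hφY : φ Y = DihedralGroup.sr 1 := PresentedGroup.toGroup.of hrels
  have hφa : φ a = DihedralGroup.r 1 := by
    rw [ha, map_mul, hφX, hφY, DihedralGroup.sr_mul_sr, sub_zero]
  -- the inverse map
  let ψfun : DihedralGroup n → G := fun g => match g with
    | DihedralGroup.r i => za i
    | DihedralGroup.sr i => s * za i
  have hψmul : ∀ g h : DihedralGroup n, ψfun (g * h) = ψfun g * ψfun h := by
    rintro (i | i) (j | j)
    · show za (i + j) = za i * za j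
      exact hzadd i j
    · show s * za (j - i) = za i * (s * za j)
      rw [← mul_assoc, hzas, sub_eq_add_neg, add_comm, hzadd, mul_assoc]
    · show s * za (i + j) = s * za i * za j
      rw [hzadd, mul_assoc]
    · show za (j - i) = s * za i * (s * za j)
      have h2 : za i * (s * za j) = s * (za (-i) * za j) := by
        rw [← mul_assoc, hzas, mul_assoc]
      rw [mul_assoc, h2, ← mul_assoc, hs2, one_mul, ← hzadd]
      congr 1
      ring
  let ψ : DihedralGroup n →* G := MonoidHom.mk' ψfun hψmul
  have hcomp1 : ψ.comp φ = MonoidHom.id G := by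
    apply PresentedGroup.ext
    rintro (_ | _)
    · -- false : Y
      show ψ (φ Y) = Y
      rw [hφY]
      show s * za 1 = Y
      haveI : Fact (1 < n) := ⟨hn⟩
      have hv1 : ((1 : ZMod n)).val = 1 := ZMod.val_one n
      have : za 1 = a := by rw [hza]; simp only [hv1, pow_one]
      rw [this, ha, ← mul_assoc, hs2, one_mul]
    · -- true : X
      show ψ (φ X) = X
      rw [hφX]
      show s * za 0 = X
      rw [hzazero, mul_one, hs]
  have hcomp2 : φ.comp ψ = MonoidHom.id (DihedralGroup n) := by
    ext g
    have hφza : ∀ i : ZMod n, φ (za i) = DihedralGroup.r i := by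
      intro i
      rw [hza]
      show φ (a ^ i.val) = _
      rw [map_pow, hφa, DihedralGroup.r_one_pow, ZMod.natCast_val, ZMod.cast_id]
    rcases g with i | i
    · show φ (za i) = DihedralGroup.r i
      exact hφza i
    · show φ (s * za i) = DihedralGroup.sr i
      rw [map_mul, hφza, hs, hφX, DihedralGroup.sr_mul_r, zero_add]
  let e : G ≃* DihedralGroup n :=
    { toFun := φ, invFun := ψ,
      left_inv := fun x => DFunLike.congr_fun hcomp1 x,
      right_inv := fun x => DFunLike.congr_fun hcomp2 x,
      map_mul' := map_mul φ }
  refine ⟨?_, ⟨e⟩⟩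
  rw [Nat.card_congr e.toEquiv, Nat.card_eq_fintype_card, DihedralGroup.card]
end
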